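/- Let G be a finite connected graph of diameter 2 and e an edge of G such that G − e is connected. Then gp(G) − 1 ≤ gp(G − e) ≤ gp(G) + 1. -/

import Mathlib

/-!
In a graph of diameter at most two every geodesic has at most one inner vertex, so deleting the
edge `uv` only affects geodesics between two vertices all of whose shortest connections run
through `uv`. Removing a single endpoint of `uv` from a general position set (`u` if it lies in the
set, `v` otherwise) rules out every such geodesic, in either direction, at the cost of one vertex.
-/

open SimpleGraph

/-- `S` is a *general position set* of `G`: no three distinct vertices of `S`
lie on a common shortest path (geodesic) of `G`. -/
def IsGPSet {V : Type*} (G : SimpleGraph V) (S : Set V) : Prop :=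
  ∀ ⦃u v w : V⦄, u ∈ S → v ∈ S → w ∈ S → u ≠ v → u ≠ w → v ≠ w →
    ∀ p : G.Walk u v, p.IsPath → p.length = G.dist u v → w ∉ p.support

/-- The *general position number* of `G`: the maximum cardinality of a
general position set. -/
noncomputable def gpNum {V : Type*} [Fintype V] (G : SimpleGraph V) : ℕ :=
  sSup {n : ℕ | ∃ S : Finset V, IsGPSet G ↑S ∧ S.card = n}

/-- The vertex-deleted subgraph `G - x`, induced on `V(G) \ {x}`. -/
def delVert {V : Type*} (G : SimpleGraph V) (x : V) : SimpleGraph {y : V // y ≠ x} :=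
  G.comap Subtype.val

namespace SimpleGraph

variable {V : Type*} {G : SimpleGraph V} {a b c x u v : V}

lemma exists_adj_adj_of_dist_eq_two (h : G.dist a b = 2) : ∃ x, G.Adj a x ∧ G.Adj x b := by
  obtain ⟨p, hp⟩ := exists_walk_of_dist_ne_zero (h ▸ two_ne_zero)
  rw [h] at hp
  match p, hp with
  | .cons hax (.cons hxb .nil), _ => exact ⟨_, hax, hxb⟩

lemma dist_le_two_of_adj_adj (hax : G.Adj a x) (hxb : G.Adj x b) : G.dist a b ≤ 2 :=
  dist_le (.cons hax (.cons hxb .nil))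

lemma Walk.adj_adj_of_mem_support_of_length_le_two (p : G.Walk a b) (hp : p.length ≤ 2)
    (hc : c ∈ p.support) (hca : c ≠ a) (hcb : c ≠ b) :
    p.length = 2 ∧ G.Adj a c ∧ G.Adj c b := by
  match p, hp with
  | .nil, _ => simp_all
  | .cons _ .nil, _ => simp_all
  | .cons _ (.cons _ .nil), _ => simp_all
  | .cons _ (.cons _ (.cons _ _)), hp => simp only [Walk.length_cons] at hp; omega

end SimpleGraph

open SimpleGraph

section GeneralPosition

variable {V : Type*} {G : SimpleGraph V} {S : Set V} {a b x u v : V}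

lemma IsGPSet.not_adj_of_dist_eq_two (hS : IsGPSet G S) (ha : a ∈ S) (hb : b ∈ S)
    (hx : x ∈ S) (hd : G.dist a b = 2) (hax : G.Adj a x) : ¬ G.Adj x b := by
  intro hxb
  let p : G.Walk a b := .cons hax (.cons hxb .nil)
  have hlen : p.length = G.dist a b := hd.symm
  have hab : a ≠ b := by rintro rfl; simp at hd
  exact hS ha hb hx hab hax.ne hxb.ne.symm p (p.isPath_of_length_eq_dist hlen) hlen (by simp [p])

/-- Every geodesic of `G` has length at most two, so it is `a - c - b`, and it avoids the deleted
edge because `u ∉ {a, b, c}`; hence it is also a geodesic of `G - uv`. -/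
lemma IsGPSet.diff_singleton_of_deleteEdges (hdist : ∀ a b, G.dist a b ≤ 2)
    (hS : IsGPSet (G.deleteEdges {s(u, v)}) S) : IsGPSet G (S \ {u}) := by
  rintro a b c ⟨ha, hau⟩ ⟨hb, hbu⟩ ⟨hc, hcu⟩ hab hac hbc p - hlen hcp
  simp only [Set.mem_singleton_iff] at hau hbu hcu
  obtain ⟨hlen2, hac', hcb'⟩ :=
    p.adj_adj_of_mem_support_of_length_le_two (hlen ▸ hdist a b) hcp hac.symm hbc.symm
  have hacH : (G.deleteEdges {s(u, v)}).Adj a c := by simp [hac', hau, hcu]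
  have hcbH : (G.deleteEdges {s(u, v)}).Adj c b := by simp [hcb', hbu, hcu]
  have hdH : (G.deleteEdges {s(u, v)}).dist a b = 2 := by
    have := (hacH.reachable.trans hcbH.reachable).dist_anti (deleteEdges_le _)
    have := dist_le_two_of_adj_adj hacH hcbH
    omega
  exact hS.not_adj_of_dist_eq_two ha hb hc hdH hacH hcbH

/-- A geodesic of `G - uv` that is not one of `G` joins two vertices at distance one or two in
`G` all of whose `G`-geodesics use `uv`. Since `u ∉ S \ {u}`, this forces a `G`-geodesic
`v - u - w` with `v, w ∈ S`, and then `u ∈ S` contradicts `S` being in general position. -/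
lemma IsGPSet.deleteEdges_diff_singleton (hdist : ∀ a b, G.dist a b ≤ 2) (hS : IsGPSet G S)
    (hvu : v ∈ S → u ∈ S) : IsGPSet (G.deleteEdges {s(u, v)}) (S \ {u}) := by
  rintro a b c ⟨ha, hau⟩ ⟨hb, hbu⟩ ⟨hc, -⟩ hab hac hbc p hp hlen hcp
  simp only [Set.mem_singleton_iff] at hau hbu
  have hle : G.dist a b ≤ (G.deleteEdges {s(u, v)}).dist a b :=
    p.reachable.dist_anti (deleteEdges_le _)
  rcases hle.eq_or_lt with heq | hlt
  · exact hS ha hb hc hab hac hbc (p.mapLe (deleteEdges_le _)) (hp.mapLe _)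
      (by rw [Walk.length_mapLe, hlen, heq]) (by rwa [Walk.support_mapLe_eq_support])
  have hpos := (p.reachable.mono (deleteEdges_le _)).pos_dist_of_ne hab
  have hle2 := hdist a b
  interval_cases hd : G.dist a b
  · have hadj : G.Adj a b := dist_eq_one_iff_adj.mp hd
    have hadjH : (G.deleteEdges {s(u, v)}).Adj a b := by simp [hadj, hau, hbu]
    rw [dist_eq_one_iff_adj.mpr hadjH] at hlt
    exact lt_irrefl 1 hlt
  · obtain ⟨x, hax, hxb⟩ := exists_adj_adj_of_dist_eq_two hd
    have hnot : ¬ ((G.deleteEdges {s(u, v)}).Adj a x ∧ (G.deleteEdges {s(u, v)}).Adj x b) :=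
      fun h ↦ (dist_le_two_of_adj_adj h.1 h.2).not_gt hlt
    obtain rfl : x = u := by
      by_contra hxu
      exact hnot ⟨by simp [hax, hau, hxu], by simp [hxb, hbu, hxu]⟩
    have hv : a = v ∨ b = v := by
      by_contra! hv
      exact hnot ⟨by simp [hax, hau, hv.1], by simp [hxb, hbu, hv.2]⟩
    have hxS : x ∈ S := hvu (by rcases hv with rfl | rfl <;> assumption)
    exact hS.not_adj_of_dist_eq_two ha hb hxS hd hax hxb

variable [Fintype V]

lemma bddAbove_setOf_isGPSet_card (G : SimpleGraph V) :
    BddAbove {n | ∃ S : Finset V, IsGPSet G ↑S ∧ S.card = n} :=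
  ⟨Fintype.card V, fun _ ⟨T, _, hT⟩ ↦ hT ▸ T.card_le_univ⟩

lemma IsGPSet.card_le_gpNum {S : Finset V} (hS : IsGPSet G S) : S.card ≤ gpNum G :=
  le_csSup (bddAbove_setOf_isGPSet_card G) ⟨S, hS, rfl⟩

lemma exists_isGPSet_card_eq_gpNum (G : SimpleGraph V) :
    ∃ S : Finset V, IsGPSet G S ∧ S.card = gpNum G :=
  Nat.sSup_mem (s := {n | ∃ S : Finset V, IsGPSet G ↑S ∧ S.card = n})
    ⟨0, ∅, fun _ _ _ h ↦ by simp at h, rfl⟩ (bddAbove_setOf_isGPSet_card G)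

lemma gpNum_le_gpNum_add_one [DecidableEq V] {H : SimpleGraph V}
    (h : ∀ S : Finset V, IsGPSet G S → ∃ w, IsGPSet H ↑(S.erase w)) :
    gpNum G ≤ gpNum H + 1 := by
  obtain ⟨S, hS, hcard⟩ := exists_isGPSet_card_eq_gpNum G
  obtain ⟨w, hw⟩ := h S hS
  have := hw.card_le_gpNum
  have := S.pred_card_le_card_erase (a := w)
  omega

end GeneralPosition

theorem stmt_16_general {V : Type*} [Fintype V] (G : SimpleGraph V)
    (hdiam : G.diam = 2) (u v : V) :
    gpNum G - 1 ≤ gpNum (G.deleteEdges {s(u, v)}) ∧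
    gpNum (G.deleteEdges {s(u, v)}) ≤ gpNum G + 1 := by
  classical
  have hdist : ∀ a b, G.dist a b ≤ 2 := fun a b ↦
    hdiam ▸ dist_le_diam (ediam_ne_top_of_diam_ne_zero (by omega))
  refine ⟨Nat.sub_le_of_le_add (gpNum_le_gpNum_add_one fun S hS ↦ ?_),
    gpNum_le_gpNum_add_one fun S hS ↦ ⟨u, ?_⟩⟩
  · by_cases hu : u ∈ S
    · exact ⟨u, by simpa using hS.deleteEdges_diff_singleton hdist fun _ ↦ hu⟩
    · refine ⟨v, ?_⟩
      rw [Sym2.eq_swap]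
      simpa using hS.deleteEdges_diff_singleton hdist fun h ↦ absurd h hu
  · simpa using hS.diff_singleton_of_deleteEdges hdist

/-- If `G` is a finite connected graph of diameter 2 and
`e = uv` is an edge of `G` such that `G - e` is connected, then
`gp(G) - 1 ≤ gp(G - e) ≤ gp(G) + 1`. -/
theorem stmt_16 {V : Type*} [Fintype V] [DecidableEq V] (G : SimpleGraph V)
    (hG : G.Connected) (hdiam : G.diam = 2) (u v : V) (huv : G.Adj u v)
    (hconn : (G.deleteEdges {s(u, v)}).Connected) :
    gpNum G - 1 ≤ gpNum (G.deleteEdges {s(u, v)}) ∧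
    gpNum (G.deleteEdges {s(u, v)}) ≤ gpNum G + 1 :=
  stmt_16_general G hdiam u v
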